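/- arXiv:1211.3049 — 2 statements merged into one kernel-verified Lean document; each statement's English description precedes it below -/
import Mathlib

section
/- A word u over the alphabet {0,1} is central (i.e., a palindromic prefix of some characteristic Sturmian word, equivalently both 0u1 and 1u0 are balanced) if and only if u is a palindrome and either u is a power of a single letter, or u = p01q = q10p for some palindromes p and q. -/
/-!
Write `n = |u| + 2` and `K = |u|₁ + 1`. Then `u` is central exactly when `0u1` is the Christoffel
word with `K` ones and length `n`, `K` coprime to `n`, i.e. when its prefix of length `m` has
`⌊m K / n⌋` ones. If `0u1` and `1u0` are balanced, `r m = m K - n |(0u1)[0, m)|₁` and `n - r` are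
subadditive and `r m + r (n - m) = n`, which confines `r` to `(0, n)`. Conversely, prefix counts
`⌊m K / n⌋` in `0u1` and `⌈m K / n⌉` in `1u0` give every factor of length `l` either `⌊l K / n⌋` or
`⌊l K / n⌋ + 1` ones.

The letters of the Christoffel word are read off the residues `m K mod n`. If `a K ≡ -1 (mod n)`,
its central part has the periods `a` and `n - a`, and so it is `p01q = q10p` with `|p| = a - 2`.
Conversely, the solutions of `p01q = q10p` arise from `(0ᵏ, 0ᵏ⁺¹)` and `(1ᵏ⁺¹, 1ᵏ)` by the moves
`(p, r) ↦ (p, p01r)` and `(s, q) ↦ (s01q, q)`. Along the way `p` and `q` stay palindromes,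
`|p| + 2` and `|q| + 2` stay coprime, and `(p, q)` is determined by the two lengths, so `p01q` is
the central part of the Christoffel word with `(|p| + 2) K ≡ -1 (mod n)`.
-/

/-- A finite binary word is balanced if the numbers of occurrences of `true`
in any two factors of equal length differ by at most 1. -/
def BalancedWord (w : List Bool) : Prop :=
  ∀ u v : List Bool, u <:+: w → v <:+: w → u.length = v.length →
    u.count true ≤ v.count true + 1

/-- A word `u` is central if both `0u1` and `1u0` are balanced. -/
def Central (u : List Bool) : Prop :=
  BalancedWord (false :: (u ++ [true])) ∧ BalancedWord (true :: (u ++ [false]))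

open List

def prefixCount (w : List Bool) (m : ℕ) : ℕ := (w.take m).count true

/-- The lower Christoffel word with `K` ones and length `n`: its `i`-th letter is
`⌊(i + 1) K / n⌋ - ⌊i K / n⌋`, i.e. whether adding `K` to the residue `i K mod n` wraps around. -/
def christoffelWord (K n : ℕ) : List Bool :=
  (range n).map fun i => decide (n ≤ i * K % n + K)

def IsChristoffel (w : List Bool) : Prop :=
  ∃ K < w.length, K.Coprime w.length ∧ w = christoffelWord K w.length

def IsSplit (p q : List Bool) : Prop :=
  p ++ [false, true] ++ q = q ++ [true, false] ++ p

section PrefixCount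

variable {w : List Bool} {m : ℕ}

@[simp]
lemma length_cons_append_singleton {α : Type*} (a b : α) (u : List α) :
    (a :: (u ++ [b])).length = u.length + 2 := by
  simp

@[simp]
lemma prefixCount_zero (w : List Bool) : prefixCount w 0 = 0 := by
  simp [prefixCount]

lemma prefixCount_of_length_le (h : w.length ≤ m) : prefixCount w m = w.count true := by
  rw [prefixCount, take_of_length_le h]

lemma prefixCount_add (w : List Bool) (i l : ℕ) :
    prefixCount w (i + l) = prefixCount w i + ((w.drop i).take l).count true := by
  rw [prefixCount, prefixCount, take_add, count_append]

lemma prefixCount_succ (h : m < w.length) :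
    prefixCount w (m + 1) = prefixCount w m + w[m].toNat := by
  rw [prefixCount_add, drop_eq_getElem_cons h]
  cases w[m] <;> simp

lemma eq_of_prefixCount_eq {v w : List Bool} (hl : v.length = w.length)
    (h : ∀ m ≤ v.length, prefixCount v m = prefixCount w m) : v = w := by
  refine ext_getElem hl fun i hv hw => ?_
  have hsucc := h (i + 1) hv
  rw [prefixCount_succ hv, prefixCount_succ hw, h i hv.le] at hsucc
  revert hsucc
  cases v[i] <;> cases w[i] <;> simp

lemma exists_take_drop_eq_of_infix {u : List Bool} (h : u <:+: w) :
    ∃ i, i + u.length ≤ w.length ∧ (w.drop i).take u.length = u := by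
  obtain ⟨s, t, rfl⟩ := h
  exact ⟨s.length, by simp, by simp⟩

lemma balancedWord_iff : BalancedWord w ↔ ∀ i j l, i + l ≤ w.length → j + l ≤ w.length →
    prefixCount w (i + l) + prefixCount w j ≤ prefixCount w i + prefixCount w (j + l) + 1 := by
  constructor
  · intro hw i j l hi hj
    have window_infix (x : ℕ) : (w.drop x).take l <:+: w :=
      (take_prefix l _).isInfix.trans (drop_suffix x w).isInfix
    have := hw _ _ (window_infix i) (window_infix j) (by simp; omega)
    rw [prefixCount_add, prefixCount_add]
    omega
  · intro h u v hu hv hl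
    obtain ⟨i, hi, hui⟩ := exists_take_drop_eq_of_infix hu
    obtain ⟨j, hj, hvj⟩ := exists_take_drop_eq_of_infix hv
    have := h i j _ hi (hl ▸ hj)
    rw [prefixCount_add, prefixCount_add, hui, hl, hvj] at this
    omega

/-- Every factor of length `l` contains `⌊l K / n⌋` or `⌊l K / n⌋ + 1` ones. -/
lemma balancedWord_of_prefixCount_eq_div {K c n : ℕ}
    (h : ∀ m ≤ w.length, prefixCount w m = (m * K + c) / n) : BalancedWord w := by
  rw [balancedWord_iff]
  intro i j l hi hj
  have window (x : ℕ) (hx : x + l ≤ w.length) : prefixCount w x + l * K / n ≤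
      prefixCount w (x + l) ∧ prefixCount w (x + l) ≤ prefixCount w x + l * K / n + 1 := by
    rw [h x (by omega), h (x + l) hx, show (x + l) * K + c = (x * K + c) + l * K by ring]
    exact ⟨Nat.div_add_div_le_add_div, Nat.add_div_le_div_add_div_add_one _ _ _⟩
  have := window i hi
  have := window j hj
  omega

end PrefixCount

section ChristoffelWord

variable {K n m : ℕ}

@[simp]
lemma length_christoffelWord : (christoffelWord K n).length = n := by
  simp [christoffelWord]

@[simp]
lemma getElem_christoffelWord {i : ℕ} (h : i < (christoffelWord K n).length) :
    (christoffelWord K n)[i] = decide (n ≤ i * K % n + K) := by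
  simp [christoffelWord]

lemma prefixCount_christoffelWord (hK : K < n) (hm : m ≤ n) :
    prefixCount (christoffelWord K n) m = m * K / n := by
  induction m with
  | zero => simp
  | succ m ih =>
    have hn : 0 < n := by omega
    rw [prefixCount_succ (by simp; omega), ih (by omega), getElem_christoffelWord,
      add_mul, one_mul, Nat.add_div hn, Nat.div_eq_of_lt hK, Nat.mod_eq_of_lt hK]
    split_ifs <;> simp_all

lemma count_christoffelWord (hK : K < n) : (christoffelWord K n).count true = K := by
  rw [← prefixCount_of_length_le (length_christoffelWord).le,
    prefixCount_christoffelWord hK le_rfl, Nat.mul_div_cancel_left _ (by omega)]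

end ChristoffelWord

section Subadditive

variable {n : ℕ} {r : ℕ → ℤ}

lemma le_add_mul_of_subadditive
    (hsub : ∀ i l, 0 < i → 0 < l → i + l < n → r (i + l) ≤ r i + r l)
    {m d : ℕ} (hm : 0 < m) (hd : 0 < d) (j : ℕ) (hj : m + j * d < n) :
    r (m + j * d) ≤ r m + j * r d := by
  induction j with
  | zero => simp
  | succ j ih =>
    rw [add_mul, one_mul, ← add_assoc] at hj ⊢
    have := hsub (m + j * d) d (by omega) hd hj
    push_cast
    linarith [ih (by omega)]

/-- Write `n = m + j d + d` with `0 < m ≤ d`; subadditivity and `r (n - d) = n - r d` give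
`r m ≥ n`, which rules out `m = d`. -/
lemma exists_lt_le_of_nonpos
    (hsub : ∀ i l, 0 < i → 0 < l → i + l < n → r (i + l) ≤ r i + r l)
    (hrefl : ∀ m, 0 < m → m < n → r m + r (n - m) = n)
    {d : ℕ} (hd : 0 < d) (hdn : d < n) (hrd : r d ≤ 0) :
    ∃ m, 0 < m ∧ m < d ∧ (n : ℤ) ≤ r m := by
  obtain ⟨j, hj⟩ : ∃ j, (n - 1) / d = j + 1 :=
    ⟨(n - 1) / d - 1, by have := (Nat.le_div_iff_mul_le hd).2 (by omega : 1 * d ≤ n - 1); omega⟩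
  have hsplit : (n - 1) % d + 1 + j * d = n - d := by
    have := Nat.div_add_mod (n - 1) d
    rw [hj, mul_add, mul_one, mul_comm] at this
    omega
  have hmd : (n - 1) % d < d := Nat.mod_lt _ hd
  have hle := le_add_mul_of_subadditive hsub (m := (n - 1) % d + 1) (by omega) hd j (by omega)
  rw [hsplit] at hle
  have hjr : (j : ℤ) * r d ≤ 0 := mul_nonpos_of_nonneg_of_nonpos (by positivity) hrd
  have hge : (n : ℤ) ≤ r ((n - 1) % d + 1) := by linarith [hrefl d hd hdn]
  refine ⟨(n - 1) % d + 1, by omega, ?_, hge⟩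
  rcases Nat.lt_or_ge ((n - 1) % d + 1) d with h | h
  · exact h
  · have : (n - 1) % d + 1 = d := by omega
    rw [this] at hge
    omega

/-- A value of `r` outside `(0, n)` at `m` yields, through `exists_lt_le_of_nonpos` applied to `r`
or to `n - r`, one at a smaller index. -/
lemma pos_and_lt_of_subadditive
    (hsub : ∀ i l, 0 < i → 0 < l → i + l < n → r (i + l) ≤ r i + r l)
    (hsub' : ∀ i l, 0 < i → 0 < l → i + l < n → r i + r l ≤ r (i + l) + n)
    (hrefl : ∀ m, 0 < m → m < n → r m + r (n - m) = n) (m : ℕ) (hm : 0 < m) (hmn : m < n) :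
    0 < r m ∧ r m < n := by
  induction m using Nat.strong_induction_on with
  | _ m ih =>
  constructor
  · by_contra! h
    obtain ⟨k, hk, hkm, hrk⟩ := exists_lt_le_of_nonpos hsub hrefl hm hmn h
    linarith [(ih k hkm hk (by omega)).2]
  · by_contra! h
    obtain ⟨k, hk, hkm, hrk⟩ := exists_lt_le_of_nonpos (r := fun m => n - r m)
      (fun i l hi hl hil => by linarith [hsub' i l hi hl hil])
      (fun m hm hmn => by linarith [hrefl m hm hmn]) hm hmn (by linarith)
    linarith [(ih k hkm hk (by omega)).1]

end Subadditive

lemma Nat.mul_mod_add_mul_mod (a b K n : ℕ) :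
    a * K % n + b * K % n = (a + b) * K % n ∨ a * K % n + b * K % n = (a + b) * K % n + n := by
  have := Nat.add_mod_add_ite (a * K) (b * K) n
  rw [← add_mul] at this
  split_ifs at this <;> omega

section Residues

variable {K n : ℕ}

lemma Nat.coprime_of_forall_not_dvd_mul (hn : 0 < n)
    (h : ∀ m, 0 < m → m < n → ¬ n ∣ m * K) : K.Coprime n := by
  obtain ⟨k, hk⟩ := Nat.gcd_dvd_left K n
  obtain ⟨n', hn'⟩ := Nat.gcd_dvd_right K n
  by_contra hg
  have hg2 : 2 ≤ K.gcd n := by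
    have : K.gcd n ≠ 0 := by intro h0; rw [h0] at hn'; omega
    unfold Nat.Coprime at hg
    omega
  refine h n' (Nat.pos_of_ne_zero ?_) ?_ ⟨k, ?_⟩
  · rintro rfl; omega
  · nlinarith
  · rw [hk]; nth_rw 2 [hn']; ring

lemma Nat.mul_mod_ne_zero_of_coprime {m : ℕ} (hco : K.Coprime n) (h0 : 0 < m) (hm : m < n) :
    m * K % n ≠ 0 := fun h =>
  absurd (Nat.le_of_dvd h0 (hco.symm.dvd_of_dvd_mul_right (Nat.dvd_of_mod_eq_zero h))) (by omega)

lemma Nat.eq_of_mul_mod_eq (hco : K.Coprime n) {a b : ℕ} (ha : a < n) (hb : b < n)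
    (h : a * K % n = b * K % n) : a = b := by
  have := Nat.ModEq.cancel_right_of_coprime hco.symm h
  rwa [Nat.ModEq, Nat.mod_eq_of_lt ha, Nat.mod_eq_of_lt hb] at this

lemma Nat.sub_mul_mod_add_mul_mod (hco : K.Coprime n) {m : ℕ} (h0 : 0 < m) (hm : m < n) :
    (n - m) * K % n + m * K % n = n := by
  have h1 := Nat.mul_mod_ne_zero_of_coprime hco h0 hm
  have h2 := Nat.mul_mod_ne_zero_of_coprime hco (m := n - m) (by omega) (by omega)
  have h3 := Nat.mod_lt ((n - m) * K) (by omega : 0 < n)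
  have h4 := Nat.mod_lt (m * K) (by omega : 0 < n)
  rcases Nat.mul_mod_add_mul_mod (n - m) m K n with h | h <;>
    rw [Nat.sub_add_cancel hm.le, Nat.mul_mod_right] at h <;> omega

lemma Nat.pred_mul_mod (hco : K.Coprime n) (hK : K < n) (hn : 1 < n) :
    (n - 1) * K % n = n - K := by
  have := Nat.sub_mul_mod_add_mul_mod hco zero_lt_one hn
  rw [one_mul, Nat.mod_eq_of_lt hK] at this
  omega

lemma Nat.two_le_of_mul_mod_eq_sub_one {a : ℕ} (hco : a.Coprime n) (ha : 2 ≤ a)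
    (han : a + 2 ≤ n) (hK : K < n) (haK : a * K % n = n - 1) : 2 ≤ K ∧ K + 2 ≤ n := by
  refine ⟨?_, ?_⟩ <;> by_contra! h
  · interval_cases K
    · simp at haK; omega
    · rw [mul_one, Nat.mod_eq_of_lt (by omega)] at haK; omega
  · obtain rfl : K = n - 1 := by omega
    have := Nat.pred_mul_mod hco (by omega) (by omega)
    rw [mul_comm] at haK
    omega

lemma Nat.exists_mul_mod_eq_sub_one {a : ℕ} (hco : a.Coprime n) (hn : 0 < n) :
    ∃ K < n, K.Coprime n ∧ a * K % n = n - 1 := by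
  obtain ⟨m, rfl⟩ : ∃ m, n = m + 1 := ⟨n - 1, by omega⟩
  obtain ⟨w, hw⟩ : ∃ w : (ZMod (m + 1))ˣ, (w : ZMod (m + 1)) = a :=
    ⟨ZMod.unitOfCoprime a hco, ZMod.coe_unitOfCoprime a hco⟩
  refine ⟨((-w⁻¹ : (ZMod (m + 1))ˣ) : ZMod (m + 1)).val, ZMod.val_lt _,
    ZMod.val_coe_unit_coprime _, ?_⟩
  rw [← ZMod.val_natCast, Nat.cast_mul, ZMod.natCast_zmod_val, ← hw, Units.val_neg, mul_neg,
    Units.mul_inv, ZMod.val_neg_one, Nat.add_sub_cancel]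

end Residues

section Central

variable {u : List Bool} {m : ℕ}

lemma prefixCount_true_cons (h0 : 0 < m) (hm : m < u.length + 2) :
    prefixCount (true :: (u ++ [false])) m = prefixCount (false :: (u ++ [true])) m + 1 := by
  obtain ⟨m, rfl⟩ := Nat.exists_eq_add_of_lt h0
  simp [prefixCount, take_append_of_le_length (by omega : m ≤ u.length)]

lemma Central.prefixCount_add_le (hc : Central u) {i l : ℕ} (h : i + l ≤ u.length + 2) :
    prefixCount (false :: (u ++ [true])) (i + l) ≤
      prefixCount (false :: (u ++ [true])) i + prefixCount (false :: (u ++ [true])) l + 1 := by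
  simpa using balancedWord_iff.1 hc.1 i 0 l (by simpa using h) (by simp; omega)

lemma Central.prefixCount_add_prefixCount_le (hc : Central u) {i l : ℕ} (hi : 0 < i) (hl : 0 < l)
    (h : i + l < u.length + 2) :
    prefixCount (false :: (u ++ [true])) i + prefixCount (false :: (u ++ [true])) l ≤
      prefixCount (false :: (u ++ [true])) (i + l) := by
  have := balancedWord_iff.1 hc.2 0 i l (by simp; omega) (by simp; omega)
  rw [zero_add, prefixCount_zero, prefixCount_true_cons hl (by omega),
    prefixCount_true_cons hi (by omega), prefixCount_true_cons (by omega) h] at this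
  omega

lemma Central.prefixCount_add_prefixCount_sub (hc : Central u) {l : ℕ} (hl : 0 < l)
    (h : l < u.length + 2) :
    prefixCount (false :: (u ++ [true])) l + prefixCount (false :: (u ++ [true])) (u.length + 2 - l)
      = u.count true := by
  have h0 := balancedWord_iff.1 hc.1 (u.length + 2 - l) 0 l (by simp; omega) (by simp; omega)
  have h1 := balancedWord_iff.1 hc.2 0 (u.length + 2 - l) l (by simp; omega) (by simp; omega)
  have e0 : prefixCount (false :: (u ++ [true])) (u.length + 2) = u.count true + 1 := by
    rw [prefixCount_of_length_le (by simp)]; simp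
  have e1 : prefixCount (true :: (u ++ [false])) (u.length + 2) = u.count true + 1 := by
    rw [prefixCount_of_length_le (by simp)]; simp
  rw [Nat.sub_add_cancel h.le, zero_add, prefixCount_zero] at h0 h1
  rw [e0] at h0
  rw [e1, prefixCount_true_cons hl h, prefixCount_true_cons (by omega) (by omega)] at h1
  omega

lemma Central.mul_prefixCount_lt (hc : Central u) (h0 : 0 < m) (hm : m < u.length + 2) :
    (u.length + 2) * prefixCount (false :: (u ++ [true])) m < m * (u.count true + 1) ∧
      m * (u.count true + 1) <
        (u.length + 2) * prefixCount (false :: (u ++ [true])) m + (u.length + 2) := by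
  set f := prefixCount (false :: (u ++ [true]))
  have key := pos_and_lt_of_subadditive (n := u.length + 2)
    (r := fun m => (m * (u.count true + 1) : ℤ) - (u.length + 2 : ℕ) * f m)
    (fun i l hi hl h => by
      have : ((f i + f l : ℕ) : ℤ) ≤ f (i + l) := by
        exact_mod_cast hc.prefixCount_add_prefixCount_le hi hl h
      push_cast at this ⊢
      nlinarith)
    (fun i l hi hl h => by
      have : ((f (i + l) : ℕ) : ℤ) ≤ f i + f l + 1 := by
        exact_mod_cast hc.prefixCount_add_le h.le
      push_cast
      nlinarith)
    (fun l hl h => by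
      have : ((f l + f (u.length + 2 - l) : ℕ) : ℤ) = u.count true := by
        exact_mod_cast hc.prefixCount_add_prefixCount_sub hl h
      push_cast [Nat.cast_sub h.le] at this ⊢
      nlinarith)
    m h0 hm
  push_cast at key
  constructor
  · zify; linarith [key.1]
  · zify; linarith [key.2]

lemma Central.isChristoffel (hc : Central u) : IsChristoffel (false :: (u ++ [true])) := by
  have hK : u.count true + 1 < u.length + 2 := by
    have := count_le_length (a := true) (l := u); omega
  refine ⟨u.count true + 1, by simpa using hK, ?_, ?_⟩
  · rw [length_cons_append_singleton]
    refine Nat.coprime_of_forall_not_dvd_mul (by omega) fun m h0 hm ⟨t, ht⟩ => ?_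
    obtain ⟨h1, h2⟩ := hc.mul_prefixCount_lt h0 hm
    rw [ht] at h1 h2
    have := Nat.lt_of_mul_lt_mul_left h1
    have := Nat.lt_of_mul_lt_mul_left (h2.trans_eq (mul_add_one _ _).symm)
    omega
  · refine eq_of_prefixCount_eq (by simp) fun m hm => ?_
    rw [length_cons_append_singleton] at hm ⊢
    rw [prefixCount_christoffelWord hK hm]
    rcases Nat.eq_zero_or_pos m with rfl | h0
    · simp
    rcases hm.lt_or_eq with hm | rfl
    · obtain ⟨h1, h2⟩ := hc.mul_prefixCount_lt h0 hm
      exact (Nat.div_eq_of_lt_le (by linarith) (by linarith)).symm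
    · rw [Nat.mul_div_cancel_left _ (by omega), prefixCount_of_length_le (by simp)]
      simp

lemma IsChristoffel.central (h : IsChristoffel (false :: (u ++ [true]))) : Central u := by
  obtain ⟨K, hKn, hco, hc⟩ := h
  rw [length_cons_append_singleton] at hKn hco hc
  have hf (m : ℕ) (hm : m ≤ u.length + 2) :
      prefixCount (false :: (u ++ [true])) m = m * K / (u.length + 2) := by
    rw [hc]
    exact prefixCount_christoffelWord hKn hm
  refine ⟨balancedWord_of_prefixCount_eq_div (c := 0) (by simpa using hf),
    balancedWord_of_prefixCount_eq_div (K := K) (c := u.length + 1) (n := u.length + 2) ?_⟩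
  rw [length_cons_append_singleton]
  intro m hm
  rcases Nat.eq_zero_or_pos m with rfl | h0
  · simp [Nat.div_eq_of_lt]
  rcases hm.lt_or_eq with hm | rfl
  · rw [prefixCount_true_cons h0 hm, hf m hm.le, Nat.add_div (by omega),
      Nat.div_eq_of_lt (by omega : u.length + 1 < u.length + 2),
      Nat.mod_eq_of_lt (by omega : u.length + 1 < u.length + 2),
      if_pos (by have := Nat.mul_mod_ne_zero_of_coprime hco h0 hm; omega)]
  · have hcount : (true :: (u ++ [false])).count true = K := by
      have := congrArg (count true) hc
      rw [count_christoffelWord hKn] at this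
      simpa using this
    rw [prefixCount_of_length_le (by simp), hcount, add_comm, Nat.add_mul_div_left _ _ (by omega),
      Nat.div_eq_of_lt (by omega), zero_add]

lemma central_iff_isChristoffel : Central u ↔ IsChristoffel (false :: (u ++ [true])) :=
  ⟨Central.isChristoffel, IsChristoffel.central⟩

end Central

lemma List.eq_replicate_of_append_singleton_eq_cons {α : Type*} {a : α} :
    ∀ {p : List α}, p ++ [a] = a :: p → p = replicate p.length a
  | [], _ => rfl
  | x :: p, h => by
    obtain ⟨rfl, h⟩ := cons_eq_cons.1 h
    rw [length_cons, replicate_succ, ← eq_replicate_of_append_singleton_eq_cons h]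

namespace IsSplit

variable {p q : List Bool}

lemma length_ne (h : IsSplit p q) : p.length ≠ q.length := fun hl => by
  simpa using (append_inj (append_inj h (by simp [hl])).1 hl).2

lemma exists_replicate_false (h : IsSplit p q) (hl : q.length = p.length + 1) :
    ∃ k, p = replicate k false ∧ q = replicate (k + 1) false := by
  have h' : (p ++ [false]) ++ (true :: q) = q ++ (true :: false :: p) := by simpa [IsSplit] using h
  obtain ⟨hq, hp⟩ := append_inj h' (by simp [hl])
  rw [cons_inj_right] at hp
  have hrep := eq_replicate_of_append_singleton_eq_cons (hq.trans hp)
  exact ⟨_, hrep, by rw [hp, replicate_succ, ← hrep]⟩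

lemma exists_replicate_true (h : IsSplit p q) (hl : p.length = q.length + 1) :
    ∃ k, p = replicate (k + 1) true ∧ q = replicate k true := by
  have h' : p ++ (false :: true :: q) = (q ++ [true]) ++ (false :: p) := by simpa [IsSplit] using h
  obtain ⟨hp, hq⟩ := append_inj h' (by simp [hl])
  rw [cons_inj_right] at hq
  have hrep := eq_replicate_of_append_singleton_eq_cons (hp.symm.trans hq.symm)
  exact ⟨_, by rw [← hq, replicate_succ, ← hrep], hrep⟩

lemma exists_eq_right (h : IsSplit p q) (hl : p.length + 2 ≤ q.length) :
    ∃ r, q = p ++ [false, true] ++ r ∧ IsSplit p r := by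
  have hq : q <+: p ++ [false, true] ++ q := by rw [h, append_assoc]; exact prefix_append _ _
  obtain ⟨r, rfl⟩ := prefix_of_prefix_length_le (prefix_append _ _) hq (by simpa using hl)
  refine ⟨r, rfl, append_cancel_left (as := p ++ [false, true]) ?_⟩
  simpa only [IsSplit, append_assoc] using h

lemma exists_eq_left (h : IsSplit p q) (hl : q.length + 2 ≤ p.length) :
    ∃ s, p = s ++ [false, true] ++ q ∧ IsSplit s q := by
  have hp : p <+: q ++ [true, false] ++ p := by rw [← h, append_assoc]; exact prefix_append _ _
  obtain ⟨s, rfl⟩ := prefix_of_prefix_length_le (prefix_append _ _) hp (by simpa using hl)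
  have hs : IsSplit s q := append_cancel_left (as := q ++ [true, false]) (by
    simpa only [IsSplit, append_assoc] using h)
  exact ⟨s, hs.symm, hs⟩

theorem induction {motive : List Bool → List Bool → Prop}
    (replicate_false : ∀ k, motive (replicate k false) (replicate (k + 1) false))
    (replicate_true : ∀ k, motive (replicate (k + 1) true) (replicate k true))
    (append_right : ∀ p r, IsSplit p r → motive p r → motive p (p ++ [false, true] ++ r))
    (append_left : ∀ s q, IsSplit s q → motive s q → motive (s ++ [false, true] ++ q) q)
    (h : IsSplit p q) : motive p q := by
  induction hN : p.length + q.length using Nat.strong_induction_on generalizing p q with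
  | _ N ih =>
  rcases (by have := h.length_ne; omega : q.length = p.length + 1 ∨ p.length = q.length + 1 ∨
    p.length + 2 ≤ q.length ∨ q.length + 2 ≤ p.length) with hl | hl | hl | hl
  · obtain ⟨k, rfl, rfl⟩ := h.exists_replicate_false hl
    exact replicate_false k
  · obtain ⟨k, rfl, rfl⟩ := h.exists_replicate_true hl
    exact replicate_true k
  · obtain ⟨r, rfl, hr⟩ := h.exists_eq_right hl
    exact append_right p r hr (ih _ (by simp at hN ⊢; omega) hr rfl)
  · obtain ⟨s, rfl, hs⟩ := h.exists_eq_left hl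
    exact append_left s q hs (ih _ (by simp at hN ⊢; omega) hs rfl)

lemma reverse_eq (h : IsSplit p q) : p.reverse = p ∧ q.reverse = q := by
  refine h.induction (motive := fun p q => p.reverse = p ∧ q.reverse = q) (fun k => by simp)
    (fun k => by simp) (fun p r hr ih => ?_) (fun s q hs ih => ?_)
  · exact ⟨ih.1, by simp [ih.1, ih.2, hr.symm]⟩
  · exact ⟨by simp [ih.1, ih.2, hs.symm], ih.2⟩

lemma reverse_append (h : IsSplit p q) :
    (p ++ [false, true] ++ q).reverse = p ++ [false, true] ++ q := by
  obtain ⟨hp, hq⟩ := h.reverse_eq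
  conv_rhs => rw [h]
  simp [hp, hq]

lemma coprime (h : IsSplit p q) : (p.length + 2).Coprime (q.length + 2) := by
  refine h.induction (motive := fun p q => (p.length + 2).Coprime (q.length + 2)) (fun k => ?_)
    (fun k => ?_) (fun p r _ ih => ?_) (fun s q _ ih => ?_)
  · simp [show k + 1 + 2 = (k + 2) + 1 by ring]
  · simp only [length_replicate]
    rw [show k + 1 + 2 = 1 + (k + 2) by ring, Nat.coprime_add_self_left]
    exact Nat.coprime_one_left _
  · rw [show (p ++ [false, true] ++ r).length + 2 = (r.length + 2) + (p.length + 2) by simp; ring,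
      Nat.coprime_add_self_right]
    exact ih
  · rw [show (s ++ [false, true] ++ q).length + 2 = (s.length + 2) + (q.length + 2) by simp; ring,
      Nat.coprime_add_self_left]
    exact ih

lemma eq_of_length_eq {p' q' : List Bool} (h : IsSplit p q) (h' : IsSplit p' q')
    (hp : p'.length = p.length) (hq : q'.length = q.length) : p' = p ∧ q' = q := by
  refine h.induction (motive := fun p q => ∀ p' q', IsSplit p' q' → p'.length = p.length →
    q'.length = q.length → p' = p ∧ q' = q) ?_ ?_ ?_ ?_ p' q' h' hp hq
  · intro k p' q' h' hp hq
    obtain ⟨k', rfl, rfl⟩ := h'.exists_replicate_false (by simp at hp hq; omega)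
    simp_all
  · intro k p' q' h' hp hq
    obtain ⟨k', rfl, rfl⟩ := h'.exists_replicate_true (by simp at hp hq; omega)
    simp_all
  · intro p r _ ih p' q' h' hp hq
    obtain ⟨r', rfl, hr'⟩ := h'.exists_eq_right (by simp at hq; omega)
    obtain ⟨rfl, rfl⟩ := ih _ _ hr' hp (by simp at hq; omega)
    simp
  · intro s q _ ih p' q' h' hp hq
    obtain ⟨s', rfl, hs'⟩ := h'.exists_eq_left (by simp at hp; omega)
    obtain ⟨rfl, rfl⟩ := ih _ _ hs' (by simp at hp; omega) hq
    simp

end IsSplit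

lemma List.eq_take_append_getElem_append_drop {α : Type*} {u : List α} {i : ℕ}
    (h : i + 1 < u.length) : u = u.take i ++ [u[i], u[i + 1]] ++ u.drop (i + 2) := by
  conv_lhs => rw [← take_append_drop i u, drop_eq_getElem_cons (by omega), drop_eq_getElem_cons h]
  simp

lemma List.drop_eq_take_of_getElem_add {α : Type*} {u : List α} {t : ℕ}
    (h : ∀ k (hk : k + t < u.length), u[k + t] = u[k]) : u.drop t = u.take (u.length - t) := by
  refine ext_getElem (by simp) fun k h1 _ => ?_
  have := h k (by simp at h1; omega)
  simp only [add_comm k t] at this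
  simpa only [getElem_drop, getElem_take] using this

/-- Each period identifies the part after one marker with the part before the other. -/
lemma isSplit_take_drop_of_periodic {u : List Bool} {i j : ℕ} (hlen : i + j + 2 = u.length)
    (hpi : ∀ k (hk : k + (i + 2) < u.length), u[k + (i + 2)] = u[k])
    (hpj : ∀ k (hk : k + (j + 2) < u.length), u[k + (j + 2)] = u[k])
    (hi : u[i] = false) (hi' : u[i + 1] = true) (hj : u[j] = true) (hj' : u[j + 1] = false) :
    IsSplit (u.take i) (u.drop (i + 2)) ∧ u = u.take i ++ [false, true] ++ u.drop (i + 2) := by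
  have hui := eq_take_append_getElem_append_drop (u := u) (i := i) (by omega)
  have huj := eq_take_append_getElem_append_drop (u := u) (i := j) (by omega)
  rw [hi, hi'] at hui
  rw [hj, hj'] at huj
  have hdi : u.drop (i + 2) = u.take j := by
    rw [drop_eq_take_of_getElem_add hpi]; congr 1; omega
  have hdj : u.drop (j + 2) = u.take i := by
    rw [drop_eq_take_of_getElem_add hpj]; congr 1; omega
  refine ⟨?_, hui⟩
  rw [IsSplit, ← hui, hdi, ← hdj, ← huj]

section Split

variable {u : List Bool} {K n : ℕ}

/-- Adding `a` with `a K ≡ -1 (mod n)` lowers the residue `m K mod n` by one, which changes the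
letter only where the residue is `n - K`, i.e. at `m = n - 1`. -/
lemma christoffel_letter_add_of_mul_mod_eq_sub_one (hco : K.Coprime n) (hK : K < n) {a m : ℕ}
    (haK : a * K % n = n - 1) (h0 : 0 < m) (hma : m + a < n) :
    decide (n ≤ (m + a) * K % n + K) = decide (n ≤ m * K % n + K) := by
  have ha : a ≠ 0 := by rintro rfl; simp at haK; omega
  have hm := Nat.mul_mod_ne_zero_of_coprime hco h0 (by omega)
  have hlast := Nat.pred_mul_mod hco hK (by omega)
  have hne : m * K % n ≠ n - K := fun h => by
    have := Nat.eq_of_mul_mod_eq hco (by omega) (by omega) (h.trans hlast.symm)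
    omega
  have := Nat.mod_lt ((m + a) * K) (by omega : 0 < n)
  have := Nat.mod_lt (m * K) (by omega : 0 < n)
  rcases Nat.mul_mod_add_mul_mod m a K n with h | h <;> rw [haK] at h <;>
    simp only [decide_eq_decide] <;> omega

/-- Adding `b` with `b K ≡ 1 (mod n)` raises the residue `m K mod n` by one, which changes the
letter only where the residue becomes `n - K`, i.e. at `m + b = n - 1`. -/
lemma christoffel_letter_add_of_mul_mod_eq_one (hco : K.Coprime n) (hK : K < n) {b m : ℕ}
    (hbK : b * K % n = 1) (hmb : m + b + 1 < n) :
    decide (n ≤ (m + b) * K % n + K) = decide (n ≤ m * K % n + K) := by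
  have hb : b ≠ 0 := by rintro rfl; simp at hbK
  have hmb0 := Nat.mul_mod_ne_zero_of_coprime hco (m := m + b) (by omega) (by omega)
  have hlast := Nat.pred_mul_mod hco hK (by omega)
  have hne : (m + b) * K % n ≠ n - K := fun h => by
    have := Nat.eq_of_mul_mod_eq hco (by omega) (by omega) (h.trans hlast.symm)
    omega
  have := Nat.mod_lt ((m + b) * K) (by omega : 0 < n)
  have := Nat.mod_lt (m * K) (by omega : 0 < n)
  rcases Nat.mul_mod_add_mul_mod m b K n with h | h <;> rw [hbK] at h <;>
    simp only [decide_eq_decide] <;> omega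

lemma getElem_of_cons_append_eq_christoffelWord
    (hc : false :: (u ++ [true]) = christoffelWord K (u.length + 2)) {j : ℕ} (hj : j < u.length) :
    u[j] = decide (u.length + 2 ≤ (j + 1) * K % (u.length + 2) + K) := by
  have := congrArg (·[j + 1]?) hc
  simpa [christoffelWord, getElem?_append_left hj, hj,
    getElem?_range (by omega : j + 1 < u.length + 2)] using this

/-- With `a K ≡ -1 (mod n)`, the central part of a Christoffel word has the periods `a` and
`n - a`, and reads `01` just before position `a` and `10` just before position `n - a`. -/
lemma isSplit_of_cons_append_eq_christoffelWord
    (hc : false :: (u ++ [true]) = christoffelWord K (u.length + 2))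
    (hco : K.Coprime (u.length + 2)) (hK : 2 ≤ K) (hKn : K + 2 ≤ u.length + 2) {a : ℕ}
    (ha : a < u.length + 2) (haK : a * K % (u.length + 2) = u.length + 1) :
    ∃ p q, IsSplit p q ∧ u = p ++ [false, true] ++ q ∧ p.length + 2 = a := by
  set n := u.length + 2
  have hu : ∀ j (hj : j < u.length), u[j] = decide (n ≤ (j + 1) * K % n + K) :=
    fun j hj => getElem_of_cons_append_eq_christoffelWord hc hj
  obtain ⟨ha2, han⟩ := Nat.two_le_of_mul_mod_eq_sub_one hco hK hKn ha (by rw [mul_comm]; omega)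
  have hbK : (n - a) * K % n = 1 := by
    have := Nat.sub_mul_mod_add_mul_mod hco (by omega) ha; omega
  have hra := Nat.mul_mod_add_mul_mod (a - 1) 1 K n
  have hrb := Nat.mul_mod_add_mul_mod (n - a - 1) 1 K n
  rw [Nat.sub_add_cancel (by omega), one_mul, Nat.mod_eq_of_lt (by omega : K < n)] at hra hrb
  have := Nat.mod_lt ((a - 1) * K) (by omega : 0 < n)
  have := Nat.mod_lt ((n - a - 1) * K) (by omega : 0 < n)
  have hua : u[a - 2] = false := by
    rw [hu _ (by omega), show a - 2 + 1 = a - 1 by omega, decide_eq_false_iff_not]; omega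
  have hua' : u[a - 2 + 1] = true := by
    rw [hu _ (by omega), show a - 2 + 1 + 1 = a by omega, haK, decide_eq_true_iff]; omega
  have hub : u[n - a - 2] = true := by
    rw [hu _ (by omega), show n - a - 2 + 1 = n - a - 1 by omega, decide_eq_true_iff]; omega
  have hub' : u[n - a - 2 + 1] = false := by
    rw [hu _ (by omega), show n - a - 2 + 1 + 1 = n - a by omega, hbK, decide_eq_false_iff_not]
    omega
  obtain ⟨hsplit, hueq⟩ := isSplit_take_drop_of_periodic (u := u) (i := a - 2) (j := n - a - 2)
    (by omega)
    (fun k hk => by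
      rw [hu _ hk, hu k (by omega), show k + (a - 2 + 2) + 1 = k + 1 + a by omega,
        christoffel_letter_add_of_mul_mod_eq_sub_one hco (by omega) haK (by omega) (by omega)])
    (fun k hk => by
      rw [hu _ hk, hu k (by omega), show k + (n - a - 2 + 2) + 1 = k + 1 + (n - a) by omega,
        christoffel_letter_add_of_mul_mod_eq_one hco (by omega) hbK (by omega)])
    hua hua' hub hub'
  exact ⟨_, _, hsplit, hueq, by simp; omega⟩

end Split

lemma exists_christoffelWord_eq_cons_append {K n : ℕ} (hco : K.Coprime n) (hK : K < n)
    (hn : 1 < n) : ∃ v, christoffelWord K n = false :: (v ++ [true]) := by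
  obtain ⟨m, rfl⟩ : ∃ m, n = m + 2 := ⟨n - 2, by omega⟩
  have hlast : (m + 1) * K % (m + 2) = m + 2 - K := by simpa using Nat.pred_mul_mod hco hK hn
  refine ⟨(range m).map fun i => decide (m + 2 ≤ (i + 1) * K % (m + 2) + K), ?_⟩
  rw [christoffelWord, range_succ, range_succ_eq_map]
  simp [hlast, hK, Nat.sub_add_cancel hK.le]

lemma IsChristoffel.eq_replicate_or_isSplit {u : List Bool}
    (h : IsChristoffel (false :: (u ++ [true]))) :
    (∃ a k, u = replicate k a) ∨ ∃ p q, IsSplit p q ∧ u = p ++ [false, true] ++ q := by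
  obtain ⟨K, hKn, hco, hc⟩ := h
  rw [length_cons_append_singleton] at hKn hco hc
  have hcount : u.count true + 1 = K := by
    simpa [count_christoffelWord hKn] using congrArg (count true) hc
  rcases (by omega : K = 1 ∨ K = u.length + 1 ∨ 2 ≤ K ∧ K + 2 ≤ u.length + 2)
    with rfl | rfl | ⟨hK, hKn'⟩
  · refine Or.inl ⟨false, u.length, eq_replicate_iff.2 ⟨rfl, fun b hb => ?_⟩⟩
    have : true ∉ u := count_eq_zero.1 (by omega)
    cases b <;> simp_all
  · exact Or.inl ⟨true, u.length, eq_replicate_iff.2 ⟨rfl, fun b hb =>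
      (count_eq_length.1 (by omega) b hb).symm⟩⟩
  · obtain ⟨a, ha, -, haK⟩ := Nat.exists_mul_mod_eq_sub_one hco (by omega)
    obtain ⟨p, q, hpq, hu, -⟩ :=
      isSplit_of_cons_append_eq_christoffelWord hc hco hK hKn' ha (by rw [mul_comm]; omega)
    exact Or.inr ⟨p, q, hpq, hu⟩

lemma isChristoffel_replicate (a : Bool) (k : ℕ) :
    IsChristoffel (false :: (replicate k a ++ [true])) := by
  rw [IsChristoffel, length_cons_append_singleton, length_replicate]
  cases a
  · refine ⟨1, by omega, Nat.coprime_one_left _, ext_getElem (by simp) fun i h _ => ?_⟩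
    rcases i with _ | i
    · simp
    · simp only [length_cons, length_append, length_replicate] at h
      by_cases hik : i < k <;>
        simp [getElem_append, getElem_replicate, Nat.mod_eq_of_lt (by omega : i + 1 < k + 2), hik]
      omega
  · refine ⟨k + 1, by omega, by simp [show k + 2 = (k + 1) + 1 by ring], ext_getElem (by simp)
      fun i h _ => ?_⟩
    rcases i with _ | i
    · simp
    · simp only [length_cons, length_append, length_replicate] at h
      have := Nat.mul_mod_ne_zero_of_coprime (K := k + 1) (n := k + 2) (m := i + 1)
        (by simp [show k + 2 = (k + 1) + 1 by ring]) (by omega) (by omega)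
      simp [getElem_append, getElem_replicate]
      omega

lemma isChristoffel_of_isSplit {p q : List Bool} (h : IsSplit p q) :
    IsChristoffel (false :: (p ++ [false, true] ++ q ++ [true])) := by
  set n := p.length + q.length + 4
  have hco : (p.length + 2).Coprime n := by
    rw [show n = (p.length + 2) + (q.length + 2) by omega, Nat.coprime_self_add_right]
    exact h.coprime
  obtain ⟨K, hKn, hKco, haK⟩ := Nat.exists_mul_mod_eq_sub_one hco (by omega)
  obtain ⟨hK2, hKn'⟩ := Nat.two_le_of_mul_mod_eq_sub_one hco (by omega) (by omega) hKn haK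
  obtain ⟨v, hv⟩ := exists_christoffelWord_eq_cons_append hKco hKn (by omega)
  have hvlen : v.length + 2 = n := by simpa using congrArg length hv.symm
  rw [← hvlen] at hv hKco hKn hKn' haK
  obtain ⟨p', q', h', hv', hp'⟩ := isSplit_of_cons_append_eq_christoffelWord hv.symm hKco hK2 hKn'
    (a := p.length + 2) (by omega) (by omega)
  obtain ⟨rfl, rfl⟩ := h.eq_of_length_eq h' (by omega)
    (by have := congrArg length hv'; simp at this; omega)
  rw [IsChristoffel, length_cons_append_singleton, ← hv']
  exact ⟨K, hKn, hKco, hv.symm⟩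

/-- A binary word is central iff it is a palindrome and is either a power of a single
letter, or of the form `p01q = q10p` with `p`, `q` palindromes. -/
theorem central_characterization (u : List Bool) :
    Central u ↔
      (u.reverse = u ∧
        ((∃ (a : Bool) (n : ℕ), u = List.replicate n a) ∨
          ∃ p q : List Bool, p.reverse = p ∧ q.reverse = q ∧
            u = p ++ [false, true] ++ q ∧ u = q ++ [true, false] ++ p)) := by
  rw [central_iff_isChristoffel]
  constructor
  · intro h
    rcases h.eq_replicate_or_isSplit with ⟨a, k, rfl⟩ | ⟨p, q, hpq, rfl⟩
    · exact ⟨reverse_replicate, Or.inl ⟨a, k, rfl⟩⟩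
    · obtain ⟨hp, hq⟩ := hpq.reverse_eq
      exact ⟨hpq.reverse_append, Or.inr ⟨p, q, hp, hq, rfl, hpq⟩⟩
  · rintro ⟨-, ⟨a, k, rfl⟩ | ⟨p, q, -, -, rfl, hpq⟩⟩
    · exact isChristoffel_replicate a k
    · exact isChristoffel_of_isSplit hpq
end

section
/- (Three gap theorem, Slater) Let α be irrational with 0 < α < 1, and let 0 < β < 1/2. The set of gaps n_{i+1} − n_i between successive nonnegative integers n with {nα} < β has either two or three elements, and in the three-element case one of the gaps equals the sum of the other two. -/
/-!
Call `n` a hit if `{nα} < β`. Let `b` be the least `d > 0` with `{dα} < β` and `a` the least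
`d > 0` with `{dα} > 1 - β`. For `0 < e < a + b`, subtracting `b` or `a` from `e` shows that
`{eα} < β` forces `{eα} ≥ {bα}` and `{eα} > 1 - β` forces `{eα} ≤ {aα}`; comparing `a` with `b`
in the same way gives `β ≤ 1 - {aα} + {bα}` when `β ≤ 1/2`. Hence the hit following a hit `n` is
`n + b` if `{nα} < β - {bα}`, `n + a` if `{nα} ≥ 1 - {aα}`, and `n + a + b` in between. Since the
`{nα}` are dense in `[0, 1]`, each of these regions is met as soon as it is nonempty, and the
middle one is nonempty exactly when there are three gaps.
-/

open Set

namespace Int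

variable {R : Type*} [Ring R] [LinearOrder R] [IsStrictOrderedRing R] [FloorRing R] {x y : R}

theorem fract_add_of_fract_add_fract_lt_one (h : fract x + fract y < 1) :
    fract (x + y) = fract x + fract y :=
  fract_eq_iff.2 ⟨add_nonneg (fract_nonneg x) (fract_nonneg y), h, ⌊x⌋ + ⌊y⌋, by
    simp only [fract, cast_add]; abel⟩

theorem fract_add_of_one_le_fract_add_fract (h : 1 ≤ fract x + fract y) :
    fract (x + y) = fract x + fract y - 1 :=
  fract_eq_iff.2 ⟨sub_nonneg.2 h,
    sub_lt_iff_lt_add.2 (add_lt_add (fract_lt_one x) (fract_lt_one y)), ⌊x⌋ + ⌊y⌋ + 1, by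
    simp only [fract, cast_add, cast_one]; abel⟩

theorem fract_sub_of_fract_le (h : fract y ≤ fract x) : fract (x - y) = fract x - fract y :=
  fract_eq_iff.2 ⟨sub_nonneg.2 h,
    (sub_le_self _ (fract_nonneg y)).trans_lt (fract_lt_one x), ⌊x⌋ - ⌊y⌋, by
    simp only [fract, cast_sub]; abel⟩

theorem fract_sub_of_fract_lt (h : fract x < fract y) : fract (x - y) = fract x - fract y + 1 :=
  fract_eq_iff.2 ⟨by
    rw [sub_add_eq_add_sub, sub_nonneg]
    exact (fract_lt_one y).le.trans (le_add_of_nonneg_left (fract_nonneg x)),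
    add_lt_of_neg_left 1 (sub_neg.2 h), ⌊x⌋ - ⌊y⌋ - 1, by
    simp only [fract, cast_sub, cast_one]; abel⟩

theorem fract_natCast_mul_of_mul_fract_lt_one {j : ℕ} (h : j * fract x < 1) :
    fract (j * x) = j * fract x :=
  fract_eq_iff.2 ⟨mul_nonneg j.cast_nonneg (fract_nonneg x), h, j * ⌊x⌋, by
    simp only [fract, cast_mul, cast_natCast, mul_sub]; abel⟩

end Int

theorem exists_nat_mul_mem_Ioo {K : Type*} [Field K] [LinearOrder K] [IsStrictOrderedRing K]
    [FloorSemiring K] {δ u v : K} (hδ : 0 < δ) (hu : 0 ≤ u) (h : u + δ < v) :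
    ∃ j : ℕ, u < j * δ ∧ j * δ < v := by
  refine ⟨⌊u / δ⌋₊ + 1, ?_, ?_⟩
  · have := Nat.lt_floor_add_one (u / δ)
    rw [div_lt_iff₀ hδ] at this
    push_cast
    linarith
  · have := Nat.floor_le (div_nonneg hu hδ.le)
    rw [le_div_iff₀ hδ] at this
    push_cast
    linarith

theorem exists_fract_natCast_mul_mem_Ioo_of_fract_lt {K : Type*} [Field K] [LinearOrder K]
    [IsStrictOrderedRing K] [FloorRing K] {α u v : K} {k : ℕ}
    (hk : 0 < Int.fract (k * α)) (hu : 0 ≤ u) (huv : u + Int.fract (k * α) < v) (hv : v ≤ 1) :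
    ∃ n : ℕ, u < Int.fract (n * α) ∧ Int.fract (n * α) < v := by
  obtain ⟨j, hju, hjv⟩ := exists_nat_mul_mem_Ioo hk hu huv
  refine ⟨j * k, ?_⟩
  rw [Nat.cast_mul, mul_assoc, Int.fract_natCast_mul_of_mul_fract_lt_one (hjv.trans_le hv)]
  exact ⟨hju, hjv⟩

theorem Irrational.exists_fract_natCast_mul_mem_Ioo {α u v : ℝ} (hα : Irrational α)
    (hu : 0 ≤ u) (huv : u < v) (hv : v ≤ 1) :
    ∃ n : ℕ, u < Int.fract (n * α) ∧ Int.fract (n * α) < v := by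
  obtain ⟨N, hN⟩ := exists_nat_one_div_lt (sub_pos.2 huv)
  obtain ⟨k, hk, -, hkα⟩ := Real.exists_nat_abs_mul_sub_round_le α N.succ_pos
  set y := k * α - round (k * α : ℝ)
  have hy : y ≠ 0 := sub_ne_zero.2 ((hα.natCast_mul hk.ne').ne_int _)
  have hyuv : |y| < v - u := by
    refine hkα.trans_lt (lt_of_le_of_lt ?_ hN)
    gcongr
    linarith
  rcases hy.lt_or_gt with hneg | hpos
  · -- `{k(-α)} = -y` is small: find a multiple of `-α` in `(1 - v, 1 - u)` and reflect it
    have hk' : Int.fract (k * -α) = -y :=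
      Int.fract_eq_iff.2 ⟨by linarith, by linarith [abs_of_neg hneg], -round (k * α : ℝ), by
        simp only [y]; push_cast; ring⟩
    obtain ⟨n, h1, h2⟩ := exists_fract_natCast_mul_mem_Ioo_of_fract_lt (u := 1 - v) (v := 1 - u)
      (hk' ▸ neg_pos.2 hneg) (by linarith) (by rw [hk']; linarith [abs_of_neg hneg]) (by linarith)
    have hn : Int.fract (n * α) ≠ 0 := fun h => by
      rw [mul_neg, Int.fract_neg_eq_zero.2 h] at h1
      linarith
    rw [mul_neg, Int.fract_neg hn] at h1 h2
    exact ⟨n, by linarith, by linarith⟩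
  · have hk' : Int.fract (k * α) = y :=
      Int.fract_eq_iff.2 ⟨hpos.le, by linarith [abs_of_pos hpos], round (k * α : ℝ), by
        simp only [y]; ring⟩
    exact exists_fract_natCast_mul_mem_Ioo_of_fract_lt (hk' ▸ hpos) hu
      (by rw [hk']; linarith [abs_of_pos hpos]) hv

def IsGapAfter (α β : ℝ) (n d : ℕ) : Prop :=
  Int.fract ((n + d) * α) < β ∧ ∀ m : ℕ, n < m → m < n + d → ¬ Int.fract (m * α) < β

def gaps (α β : ℝ) : Set ℕ :=
  {d | 0 < d ∧ ∃ n : ℕ, Int.fract (n * α) < β ∧ IsGapAfter α β n d}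

section Gaps

variable {α β : ℝ} {a b d d' e n : ℕ}

theorem IsGapAfter.unique (h : IsGapAfter α β n d) (h' : IsGapAfter α β n d') (hd : 0 < d)
    (hd' : 0 < d') : d = d' := by
  by_contra hne
  rcases Nat.lt_or_gt_of_ne hne with hlt | hlt
  · exact h'.2 (n + d) (by omega) (by omega) (by exact_mod_cast h.1)
  · exact h.2 (n + d') (by omega) (by omega) (by exact_mod_cast h'.1)

theorem isGapAfter_of_forall (hd : Int.fract ((n + d) * α) < β)
    (h : ∀ e : ℕ, 0 < e → e < d → ¬ Int.fract ((n + e) * α) < β) : IsGapAfter α β n d := by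
  refine ⟨hd, fun m hnm hmd => ?_⟩
  have := h (m - n) (by omega) (by omega)
  rwa [Nat.cast_sub hnm.le, add_sub_cancel] at this

theorem le_fract_mul_of_lt_add
    (ha : IsLeast {e : ℕ | 0 < e ∧ 1 - β < Int.fract (e * α)} a)
    (hb : IsLeast {e : ℕ | 0 < e ∧ Int.fract (e * α) < β} b)
    (he : 0 < e) (hab : e < a + b) (h : Int.fract (e * α) < β) :
    Int.fract (b * α) ≤ Int.fract (e * α) := by
  by_contra! hlt
  have hbe : b < e := (hb.2 ⟨he, h⟩).lt_of_ne (by rintro rfl; exact lt_irrefl _ hlt)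
  have : a ≤ e - b := ha.2 ⟨by omega, by
    rw [Nat.cast_sub hbe.le, sub_mul, Int.fract_sub_of_fract_lt hlt]
    linarith [Int.fract_nonneg (e * α), hb.1.2]⟩
  omega

theorem fract_mul_le_of_lt_add
    (ha : IsLeast {e : ℕ | 0 < e ∧ 1 - β < Int.fract (e * α)} a)
    (hb : IsLeast {e : ℕ | 0 < e ∧ Int.fract (e * α) < β} b)
    (he : 0 < e) (hab : e < a + b) (h : 1 - β < Int.fract (e * α)) :
    Int.fract (e * α) ≤ Int.fract (a * α) := by
  by_contra! hlt
  have hae : a < e := (ha.2 ⟨he, h⟩).lt_of_ne (by rintro rfl; exact lt_irrefl _ hlt)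
  have : b ≤ e - a := hb.2 ⟨by omega, by
    rw [Nat.cast_sub hae.le, sub_mul, Int.fract_sub_of_fract_le hlt.le]
    linarith [Int.fract_lt_one (e * α), ha.1.2]⟩
  omega

theorem le_one_sub_fract_mul_add_fract_mul (hβ : β ≤ 1 / 2)
    (ha : IsLeast {e : ℕ | 0 < e ∧ 1 - β < Int.fract (e * α)} a)
    (hb : IsLeast {e : ℕ | 0 < e ∧ Int.fract (e * α) < β} b) :
    β ≤ 1 - Int.fract (a * α) + Int.fract (b * α) := by
  by_contra! hlt
  have ha0 := ha.1.1
  have hb0 := hb.1.1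
  have hba : Int.fract (b * α) < Int.fract (a * α) := by linarith [ha.1.2, hb.1.2]
  rcases lt_trichotomy a b with hab | rfl | hab
  · have : b ≤ b - a := hb.2 ⟨by omega, by
      rw [Nat.cast_sub hab.le, sub_mul, Int.fract_sub_of_fract_lt hba]
      linarith⟩
    omega
  · exact lt_irrefl _ hba
  · have : a ≤ a - b := ha.2 ⟨by omega, by
      rw [Nat.cast_sub hab.le, sub_mul, Int.fract_sub_of_fract_le hba.le]
      linarith⟩
    omega

theorem hit_add_cases
    (ha : IsLeast {e : ℕ | 0 < e ∧ 1 - β < Int.fract (e * α)} a)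
    (hb : IsLeast {e : ℕ | 0 < e ∧ Int.fract (e * α) < β} b)
    (hn : Int.fract (n * α) < β) (he : 0 < e) (hab : e < a + b)
    (hit : Int.fract ((n + e) * α) < β) :
    (b ≤ e ∧ Int.fract (b * α) ≤ Int.fract (e * α) ∧ Int.fract (n * α) + Int.fract (e * α) < β) ∨
      (a ≤ e ∧ Int.fract (e * α) ≤ Int.fract (a * α) ∧
        1 ≤ Int.fract (n * α) + Int.fract (e * α)) := by
  rw [add_mul] at hit
  rcases lt_or_ge (Int.fract (n * α) + Int.fract (e * α)) 1 with h | h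
  · rw [Int.fract_add_of_fract_add_fract_lt_one h] at hit
    have he' : Int.fract (e * α) < β := by linarith [Int.fract_nonneg (n * α)]
    exact .inl ⟨hb.2 ⟨he, he'⟩, le_fract_mul_of_lt_add ha hb he hab he', hit⟩
  · rw [Int.fract_add_of_one_le_fract_add_fract h] at hit
    have he' : 1 - β < Int.fract (e * α) := by linarith [Int.fract_lt_one (n * α)]
    exact .inr ⟨ha.2 ⟨he, he'⟩, fract_mul_le_of_lt_add ha hb he hab he', h⟩

theorem isGapAfter_of_lt_sub (hβ : β ≤ 1 / 2)
    (ha : IsLeast {e : ℕ | 0 < e ∧ 1 - β < Int.fract (e * α)} a)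
    (hb : IsLeast {e : ℕ | 0 < e ∧ Int.fract (e * α) < β} b)
    (hn : Int.fract (n * α) < β - Int.fract (b * α)) : IsGapAfter α β n b := by
  have hsum := le_one_sub_fract_mul_add_fract_mul hβ ha hb
  have hfb := Int.fract_nonneg (b * α)
  refine isGapAfter_of_forall ?_ fun e he heb hit => ?_
  · rw [add_mul, Int.fract_add_of_fract_add_fract_lt_one (by linarith)]
    linarith
  · rcases hit_add_cases ha hb (by linarith) he (by omega) hit with ⟨hbe, -⟩ | ⟨-, hea, hsum'⟩
    · omega
    · linarith

theorem isGapAfter_of_le_of_lt (hβ : β ≤ 1 / 2)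
    (ha : IsLeast {e : ℕ | 0 < e ∧ 1 - β < Int.fract (e * α)} a)
    (hb : IsLeast {e : ℕ | 0 < e ∧ Int.fract (e * α) < β} b)
    (hn : 1 - Int.fract (a * α) ≤ Int.fract (n * α)) (hn' : Int.fract (n * α) < β) :
    IsGapAfter α β n a := by
  have hsum := le_one_sub_fract_mul_add_fract_mul hβ ha hb
  refine isGapAfter_of_forall ?_ fun e he hea hit => ?_
  · rw [add_mul, Int.fract_add_of_one_le_fract_add_fract (by linarith)]
    linarith [Int.fract_lt_one (a * α)]
  · rcases hit_add_cases ha hb hn' he (by omega) hit with ⟨-, hbe, hlt⟩ | ⟨hae, -⟩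
    · linarith
    · omega

theorem isGapAfter_add_of_le_of_lt
    (ha : IsLeast {e : ℕ | 0 < e ∧ 1 - β < Int.fract (e * α)} a)
    (hb : IsLeast {e : ℕ | 0 < e ∧ Int.fract (e * α) < β} b)
    (hn : β - Int.fract (b * α) ≤ Int.fract (n * α))
    (hn' : Int.fract (n * α) < 1 - Int.fract (a * α)) :
    IsGapAfter α β n (a + b) := by
  have hfa := ha.1.2
  have hfb := hb.1.2
  have hna : Int.fract (n * α + a * α) = Int.fract (n * α) + Int.fract (a * α) :=
    Int.fract_add_of_fract_add_fract_lt_one (by linarith)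
  refine isGapAfter_of_forall ?_ fun e he heab hit => ?_
  · rw [Nat.cast_add, ← add_assoc, add_mul, add_mul,
      Int.fract_add_of_one_le_fract_add_fract (by rw [hna]; linarith), hna]
    linarith
  · rcases hit_add_cases ha hb (by linarith) he heab hit with ⟨-, hbe, hlt⟩ | ⟨-, hea, hle⟩
    · linarith
    · linarith

theorem mem_gaps_cases (hβ : β ≤ 1 / 2)
    (ha : IsLeast {e : ℕ | 0 < e ∧ 1 - β < Int.fract (e * α)} a)
    (hb : IsLeast {e : ℕ | 0 < e ∧ Int.fract (e * α) < β} b) (hd : d ∈ gaps α β) :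
    d = a ∨ d = b ∨ (d = a + b ∧ β - Int.fract (b * α) < 1 - Int.fract (a * α)) := by
  obtain ⟨hd0, n, hn, hgap⟩ := hd
  rcases lt_or_ge (Int.fract (n * α)) (β - Int.fract (b * α)) with hB | hB
  · exact .inr <| .inl <| hgap.unique (isGapAfter_of_lt_sub hβ ha hb hB) hd0 hb.1.1
  rcases le_or_gt (1 - Int.fract (a * α)) (Int.fract (n * α)) with hA | hA
  · exact .inl <| hgap.unique (isGapAfter_of_le_of_lt hβ ha hb hA hn) hd0 ha.1.1
  · exact .inr <| .inr ⟨hgap.unique (isGapAfter_add_of_le_of_lt ha hb hB hA) hd0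
      (by have := ha.1.1; omega), by linarith⟩

theorem mem_gaps_right (hβ : β ≤ 1 / 2)
    (ha : IsLeast {e : ℕ | 0 < e ∧ 1 - β < Int.fract (e * α)} a)
    (hb : IsLeast {e : ℕ | 0 < e ∧ Int.fract (e * α) < β} b) : b ∈ gaps α β :=
  ⟨hb.1.1, 0, by simpa using (Int.fract_nonneg _).trans_lt hb.1.2,
    isGapAfter_of_lt_sub hβ ha hb (by simpa using hb.1.2)⟩

theorem mem_gaps_left (hα : Irrational α) (hβ : β ≤ 1 / 2)
    (ha : IsLeast {e : ℕ | 0 < e ∧ 1 - β < Int.fract (e * α)} a)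
    (hb : IsLeast {e : ℕ | 0 < e ∧ Int.fract (e * α) < β} b) : a ∈ gaps α β := by
  obtain ⟨n, hn, hn'⟩ := hα.exists_fract_natCast_mul_mem_Ioo
    (sub_nonneg.2 (Int.fract_lt_one (a * α)).le) (by linarith [ha.1.2]) (by linarith)
  exact ⟨ha.1.1, n, hn', isGapAfter_of_le_of_lt hβ ha hb hn.le hn'⟩

theorem add_mem_gaps (hα : Irrational α)
    (ha : IsLeast {e : ℕ | 0 < e ∧ 1 - β < Int.fract (e * α)} a)
    (hb : IsLeast {e : ℕ | 0 < e ∧ Int.fract (e * α) < β} b)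
    (h : β - Int.fract (b * α) < 1 - Int.fract (a * α)) : a + b ∈ gaps α β := by
  obtain ⟨n, hn, hn'⟩ := hα.exists_fract_natCast_mul_mem_Ioo
    (sub_nonneg.2 hb.1.2.le) h (by linarith [Int.fract_nonneg (a * α)])
  exact ⟨by have := ha.1.1; omega, n, by linarith [ha.1.2],
    isGapAfter_add_of_le_of_lt ha hb hn.le hn'⟩

theorem gaps_eq_of_lt (hα : Irrational α) (hβ : β ≤ 1 / 2)
    (ha : IsLeast {e : ℕ | 0 < e ∧ 1 - β < Int.fract (e * α)} a)
    (hb : IsLeast {e : ℕ | 0 < e ∧ Int.fract (e * α) < β} b)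
    (h : β - Int.fract (b * α) < 1 - Int.fract (a * α)) : gaps α β = {a, b, a + b} := by
  refine subset_antisymm (fun d hd => ?_) ?_
  · rcases mem_gaps_cases hβ ha hb hd with rfl | rfl | ⟨rfl, -⟩ <;> simp
  · exact insert_subset (mem_gaps_left hα hβ ha hb) <|
      insert_subset (mem_gaps_right hβ ha hb) <| singleton_subset_iff.2 (add_mem_gaps hα ha hb h)

theorem gaps_eq_of_le (hα : Irrational α) (hβ : β ≤ 1 / 2)
    (ha : IsLeast {e : ℕ | 0 < e ∧ 1 - β < Int.fract (e * α)} a)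
    (hb : IsLeast {e : ℕ | 0 < e ∧ Int.fract (e * α) < β} b)
    (h : 1 - Int.fract (a * α) ≤ β - Int.fract (b * α)) : gaps α β = {a, b} := by
  refine subset_antisymm (fun d hd => ?_) ?_
  · rcases mem_gaps_cases hβ ha hb hd with rfl | rfl | ⟨-, h'⟩
    · simp
    · simp
    · exact absurd h (not_le.2 h')
  · exact insert_subset (mem_gaps_left hα hβ ha hb) <|
      singleton_subset_iff.2 (mem_gaps_right hβ ha hb)

end Gaps

theorem three_gap_general (α β : ℝ) (hα : Irrational α)
    (hb0 : 0 < β) (hb : β < 1 / 2) :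
    Set.ncard {d : ℕ | 0 < d ∧ ∃ n : ℕ, Int.fract (n * α) < β ∧
        Int.fract ((n + d) * α) < β ∧
        ∀ m : ℕ, n < m → m < n + d → ¬ Int.fract (m * α) < β} = 2 ∨
      ∃ a b : ℕ, a ≠ b ∧
        {d : ℕ | 0 < d ∧ ∃ n : ℕ, Int.fract (n * α) < β ∧
          Int.fract ((n + d) * α) < β ∧
          ∀ m : ℕ, n < m → m < n + d → ¬ Int.fract (m * α) < β} = {a, b, a + b} := by
  change (gaps α β).ncard = 2 ∨ ∃ a b : ℕ, a ≠ b ∧ gaps α β = {a, b, a + b}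
  have hβ : β ≤ 1 / 2 := hb.le
  obtain ⟨a, ha_least⟩ : ∃ a, IsLeast {e : ℕ | 0 < e ∧ 1 - β < Int.fract (e * α)} a := by
    obtain ⟨n, hn, -⟩ :=
      hα.exists_fract_natCast_mul_mem_Ioo (u := 1 - β) (by linarith) (by linarith) le_rfl
    exact ⟨_, isLeast_csInf ⟨n, Nat.pos_of_ne_zero (by rintro rfl; simp at hn; linarith), hn⟩⟩
  obtain ⟨b, hb_least⟩ : ∃ b, IsLeast {e : ℕ | 0 < e ∧ Int.fract (e * α) < β} b := by
    obtain ⟨n, hn, hn'⟩ := hα.exists_fract_natCast_mul_mem_Ioo le_rfl hb0 (by linarith)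
    exact ⟨_, isLeast_csInf ⟨n, Nat.pos_of_ne_zero (by rintro rfl; simp at hn), hn'⟩⟩
  have hab : a ≠ b := by
    rintro rfl
    linarith [ha_least.1.2, hb_least.1.2]
  rcases lt_or_ge (β - Int.fract (b * α)) (1 - Int.fract (a * α)) with hC | hC
  · exact .inr ⟨a, b, hab, gaps_eq_of_lt hα hβ ha_least hb_least hC⟩
  · exact .inl (by rw [gaps_eq_of_le hα hβ ha_least hb_least hC, ncard_pair hab])

/-- Three gap theorem (Slater): for irrational `0 < α < 1` and `0 < β < 1/2`, the gaps
between successive nonnegative integers `n` with `{nα} < β` take two or three values,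
and in the latter case one value is the sum of the other two. -/
theorem three_gap (α β : ℝ) (hα : Irrational α) (h0 : 0 < α) (h1 : α < 1)
    (hb0 : 0 < β) (hb : β < 1 / 2) :
    Set.ncard {d : ℕ | 0 < d ∧ ∃ n : ℕ, Int.fract (n * α) < β ∧
        Int.fract ((n + d) * α) < β ∧
        ∀ m : ℕ, n < m → m < n + d → ¬ Int.fract (m * α) < β} = 2 ∨
      ∃ a b : ℕ, a ≠ b ∧
        {d : ℕ | 0 < d ∧ ∃ n : ℕ, Int.fract (n * α) < β ∧
          Int.fract ((n + d) * α) < β ∧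
          ∀ m : ℕ, n < m → m < n + d → ¬ Int.fract (m * α) < β} = {a, b, a + b} :=
  three_gap_general α β hα hb0 hb
end
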